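/- arXiv:2008.11267 — 2 statements merged into one kernel-verified Lean document; each statement's English description precedes it below -/
import Mathlib

section
/- If p : L → X is a lifting projection and γ : I → X is a path, then the map f_γ : p⁻¹(γ(0)) → p⁻¹(γ(1)) sending l to the endpoint ⟨γ,l⟩(1) of the unique lift of γ starting at l is a homeomorphism, with inverse given by lifting the reverse path γ̄. -/
open unitInterval

universe u v

variable {L X K B : Type u} [TopologicalSpace L] [TopologicalSpace X] [TopologicalSpace K]
  [TopologicalSpace B]

/-- `X^I ⊓ L`: pairs `(γ, l)` of a path in `X` and a point of `L` with `p l = γ 0`,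
topologized as a subspace of `C(I, X) × L` (compact-open topology on path spaces). -/
def Sqcap (p : L → X) : Type u :=
  {q : C(I, X) × L // p q.2 = q.1 0}

instance (p : L → X) : TopologicalSpace (Sqcap p) := by unfold Sqcap; infer_instance

/-- The canonical map `p̄ : L^I → X^I ⊓ L`, `γ ↦ (p ∘ γ, γ 0)`. -/
def pbar {p : L → X} (hp : Continuous p) : C(I, L) → Sqcap p :=
  fun γ => ⟨(⟨p ∘ γ, hp.comp γ.continuous⟩, γ 0), rfl⟩

/-- A lifting projection is a continuous map `p` such that `p̄` is a homeomorphism. -/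
def IsLiftingProjection (p : L → X) : Prop :=
  ∃ hp : Continuous p, IsHomeomorph (pbar hp)

/-- A Hurewicz fibration: a continuous map with the homotopy lifting property with
respect to all spaces. -/
def IsHurewiczFibration (p : L → X) : Prop :=
  Continuous p ∧
    ∀ (Y : Type u) (_ : TopologicalSpace Y) (H : Y × I → X) (h₀ : Y → L),
      Continuous H → Continuous h₀ → (∀ y, p (h₀ y) = H (y, 0)) →
        ∃ G : Y × I → L, Continuous G ∧ (∀ z, p (G z) = H z) ∧ (∀ y, G (y, 0) = h₀ y)

/-! Lifting `γ` from `l` and then lifting its reverse from the endpoint returns to `l`, since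
the reversed lift is a lift of the reverse path; continuity in `l` holds because the lift is
the inverse of `p̄` applied to `(γ, l)`. -/

theorem pbar_eq_mk_iff {p : L → X} (hc : Continuous p) (δ : C(I, L)) (γ : C(I, X)) (l : L)
    (h : p l = γ 0) : pbar hc δ = ⟨(γ, l), h⟩ ↔ (∀ s, p (δ s) = γ s) ∧ δ 0 = l := by
  show (⟨_, _⟩ : {q : C(I, X) × L // p q.2 = q.1 0}) = ⟨(γ, l), h⟩ ↔ _
  rw [Subtype.mk.injEq, Prod.mk.injEq, ContinuousMap.ext_iff]
  rfl

namespace IsLiftingProjection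

variable {p : L → X} {lift : ∀ (γ : C(I, X)) (l : L), p l = γ 0 → C(I, L)}

theorem eq_of_comp_eq (hp : IsLiftingProjection p) {δ₁ δ₂ : C(I, L)}
    (h : ∀ s, p (δ₁ s) = p (δ₂ s)) (h₀ : δ₁ 0 = δ₂ 0) : δ₁ = δ₂ := by
  obtain ⟨hc, hhom⟩ := hp
  exact hhom.bijective.injective <| (pbar_eq_mk_iff hc _ _ _ rfl).2 ⟨h, h₀⟩

theorem lift_reverse_apply_one (hp : IsLiftingProjection p)
    (hlift : ∀ (γ : C(I, X)) (l : L) (h : p l = γ 0),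
      (∀ s, p (lift γ l h s) = γ s) ∧ lift γ l h 0 = l) {γ γ' : C(I, X)}
    (hγ' : ∀ s, γ' s = γ (σ s)) (l : L) (h : p l = γ 0) (h' : p (lift γ l h 1) = γ' 0) :
    lift γ' (lift γ l h 1) h' 1 = l := by
  have hrev : lift γ' (lift γ l h 1) h' = (lift γ l h).comp ⟨σ, continuous_symm⟩ :=
    hp.eq_of_comp_eq (fun s => by simp [(hlift γ' _ h').1, (hlift γ l h).1, hγ'])
      ((hlift γ' _ h').2.trans (by simp))
  rw [hrev]
  simpa using (hlift γ l h).2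

theorem continuous_lift (hp : IsLiftingProjection p)
    (hlift : ∀ (γ : C(I, X)) (l : L) (h : p l = γ 0),
      (∀ s, p (lift γ l h s) = γ s) ∧ lift γ l h 0 = l)
    (γ : C(I, X)) {x : X} (hx : x = γ 0) :
    Continuous fun l : {l : L // p l = x} => lift γ l.1 (l.2.trans hx) := by
  obtain ⟨hc, hhom⟩ := hp
  let e := hhom.homeomorph (pbar hc)
  have he : ∀ (l : L) (h : p l = γ 0), lift γ l h = e.symm ⟨(γ, l), h⟩ := fun l h =>
    e.injective <| ((pbar_eq_mk_iff hc _ _ _ h).2 (hlift γ l h)).trans (e.apply_symm_apply _).symm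
  simp only [he]
  exact e.symm.continuous.comp <|
    (continuous_const.prodMk continuous_subtype_val).subtype_mk _

end IsLiftingProjection

/-- For a lifting projection `p` and a path `γ` in `X`, the map
`f_γ : p⁻¹(γ 0) → p⁻¹(γ 1)`, sending `l` to the endpoint `⟨γ,l⟩(1)` of the unique lift
of `γ` starting at `l`, is a homeomorphism whose inverse is given by lifting the
reverse path `γ̄`. -/
theorem fibreTranslation_isHomeomorph {p : L → X} (hp : IsLiftingProjection p)
    (lift : ∀ (γ : C(I, X)) (l : L), p l = γ 0 → C(I, L))
    (hlift : ∀ (γ : C(I, X)) (l : L) (h : p l = γ 0),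
      (∀ s, p (lift γ l h s) = γ s) ∧ lift γ l h 0 = l)
    (γ : C(I, X)) :
    ∃ F : {l : L // p l = γ 0} ≃ₜ {l : L // p l = γ 1},
      (∀ l : {l : L // p l = γ 0}, (F l : L) = lift γ l.1 l.2 1) ∧
      (∀ l : {l : L // p l = γ 1},
        (F.symm l : L) =
          lift (γ.comp ⟨σ, continuous_symm⟩) l.1
            (by simpa using l.2) 1) := by
  set γ' := γ.comp ⟨σ, continuous_symm⟩
  have hγ' : ∀ s, γ' s = γ (σ s) := fun _ => rfl
  have hγ : ∀ s, γ s = γ' (σ s) := fun s => by simp [hγ']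
  have h₀ : γ 1 = γ' 0 := by simp [hγ']
  have h₁ : γ' 1 = γ 0 := by simp [hγ']
  refine ⟨
    { toFun := fun l => ⟨lift γ l.1 l.2 1, (hlift γ l.1 l.2).1 1⟩
      invFun := fun l => ⟨lift γ' l.1 (l.2.trans h₀) 1, ((hlift γ' _ _).1 1).trans h₁⟩
      left_inv := fun l => Subtype.ext <| hp.lift_reverse_apply_one hlift hγ' l.1 l.2 _
      right_inv := fun l => Subtype.ext <| hp.lift_reverse_apply_one hlift hγ l.1 _ _
      continuous_toFun :=
        ((continuous_eval_const 1).comp (hp.continuous_lift hlift γ rfl)).subtype_mk _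
      continuous_invFun :=
        ((continuous_eval_const 1).comp (hp.continuous_lift hlift γ' h₀)).subtype_mk _ },
    fun _ => rfl, fun _ => rfl⟩
end

section
/- If f : L → K is a fibre-preserving map between lifting projections p : L → X and q : K → X (i.e. q∘f = p), then f itself is a lifting projection. -/
open unitInterval

universe u v

variable {L X K B : Type u} [TopologicalSpace L] [TopologicalSpace X] [TopologicalSpace K]
  [TopologicalSpace B]

/-! The map `(γ, l) ↦ (q ∘ γ, l)` from `K^I ⊓ L` to `X^I ⊓ L` is continuous, injective by
unique path lifting for `q`, and carries `f̄` to `p̄`. A continuous map whose composite with a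
continuous injection is a homeomorphism is itself a homeomorphism. -/

open Function

theorem IsHomeomorph.of_comp {Y Z W : Type*} [TopologicalSpace Y] [TopologicalSpace Z]
    [TopologicalSpace W] {f : Y → Z} {g : Z → W} (hf : Continuous f) (hg : Continuous g)
    (hg_inj : Injective g) (hgf : IsHomeomorph (g ∘ f)) : IsHomeomorph f :=
  isHomeomorph_iff_isEmbedding_surjective.2
    ⟨.of_comp hf hg hgf.isEmbedding, .of_comp_left hgf.surjective hg_inj⟩

theorem continuous_pbar {p : L → X} (hp : Continuous p) : Continuous (pbar hp) :=
  ((ContinuousMap.continuous_postcomp ⟨p, hp⟩).prodMk (continuous_eval_const 0)).subtype_mk _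

theorem IsLiftingProjection.path_eq_of_comp_eq {q : K → X} (hq : IsLiftingProjection q)
    {γ γ' : C(I, K)} (hcomp : q ∘ γ = q ∘ γ') (h0 : γ 0 = γ' 0) : γ = γ' :=
  hq.snd.injective <| Subtype.ext <| Prod.ext (ContinuousMap.ext (congrFun hcomp)) h0

def Sqcap.postcomp {f : L → K} {p : L → X} {q : K → X} (hq : Continuous q)
    (hcomm : ∀ l, q (f l) = p l) : C(Sqcap f, Sqcap p) where
  toFun x := ⟨(ContinuousMap.comp ⟨q, hq⟩ x.1.1, x.1.2), (hcomm _).symm.trans (congrArg q x.2)⟩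
  continuous_toFun :=
    (((ContinuousMap.continuous_postcomp ⟨q, hq⟩).comp
      (continuous_fst.comp continuous_subtype_val)).prodMk
        (continuous_snd.comp continuous_subtype_val)).subtype_mk _

theorem Sqcap.postcomp_comp_pbar {f : L → K} {p : L → X} {q : K → X} (hf : Continuous f)
    (hp : Continuous p) (hq : Continuous q) (hcomm : ∀ l, q (f l) = p l) :
    Sqcap.postcomp hq hcomm ∘ pbar hf = pbar hp :=
  funext fun γ => Subtype.ext <| Prod.ext (ContinuousMap.ext fun t => hcomm (γ t)) rfl

theorem Sqcap.postcomp_injective {f : L → K} {p : L → X} {q : K → X}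
    (hq : IsLiftingProjection q) (hcomm : ∀ l, q (f l) = p l) :
    Injective (Sqcap.postcomp hq.fst hcomm) := by
  rintro ⟨⟨γ, l⟩, hγ⟩ ⟨⟨γ', l'⟩, hγ'⟩ h
  obtain ⟨hcomp, rfl⟩ := Prod.ext_iff.1 (congrArg Subtype.val h)
  have hpath : γ = γ' :=
    hq.path_eq_of_comp_eq (congrArg (⇑) hcomp) (hγ.symm.trans hγ')
  subst hpath
  rfl

/-- A fibre-preserving continuous map between lifting projections over
the same base is itself a lifting projection. -/
theorem IsLiftingProjection.of_fibrePreserving {p : L → X} {q : K → X} {f : L → K}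
    (hf : Continuous f) (hp : IsLiftingProjection p) (hq : IsLiftingProjection q)
    (hcomm : ∀ l, q (f l) = p l) :
    IsLiftingProjection f := by
  obtain ⟨hpc, hph⟩ := hp
  refine ⟨hf, .of_comp (continuous_pbar hf) (Sqcap.postcomp hq.fst hcomm).continuous
    (Sqcap.postcomp_injective hq hcomm) ?_⟩
  rwa [Sqcap.postcomp_comp_pbar hf hpc]
end
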